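/- Let k ≥ 2, m ≥ 1, N = 2^m, ξ = exp(2πi/2^k), and let R be a symmetric m×m integer matrix. Let a, b ∈ ℤ_{≥0}^m with binary digit expansions a = a_0 + 2a_1 + 4a_2 + … and b = b_0 + 2b_1 + 4b_2 + … where a_i, b_i ∈ {0,1}^m. Then for every v ∈ {0,1}^m, (τ_R^{(k)} E(a,b) (τ_R^{(k)})^†) e_v = ξ^{q^{(k−1)}(v; R, a, b) mod 2^k} E(a_0, b_0 + a_0 R) e_v, where q^{(k−1)}(v; R, a, b) := (1 − 2^{k−2}) a_0 R a_0^T + 2^{k−1}(a_0 b_1^T + b_0 a_1^T) + (2 + 2^{k−1}) v R a_0^T − 4 η(v; R, a_0), with η(v; R, w) := [(v + w) − (v ∗ w)] R (v ∗ w)^T. -/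

import Mathlib

open Complex Matrix

namespace CliffordHierarchy

noncomputable section

variable {ι : Type*} [Fintype ι] [DecidableEq ι]

/-- Embed a binary vector (entries in `ZMod 2`) into ℤ as a 0/1 vector. -/
def toZ (v : ι → ZMod 2) : ι → ℤ := fun i => ((v i).val : ℤ)

/-- Reduce an integer vector mod 2, viewed in `ZMod 2`. -/
def red2 (a : ι → ℤ) : ι → ZMod 2 := fun i => ((a i : ZMod 2))

/-- Dot product of integer row vectors, over ℤ. -/
def dotZ (x y : ι → ℤ) : ℤ := ∑ i, x i * y i

/-- Bilinear form `x R yᵀ` over ℤ. -/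
def bil (R : Matrix ι ι ℤ) (x y : ι → ℤ) : ℤ := ∑ i, ∑ j, x i * R i j * y j

/-- η(v; R, w) = [(v + w) − (v ∗ w)] R (v ∗ w)ᵀ, with ∗ the entrywise product. -/
def eta (R : Matrix ι ι ℤ) (v w : ι → ℤ) : ℤ := bil R (v + w - v * w) (v * w)

/-- bitwise XOR of 0/1 integer vectors, re-embedded as a 0/1 integer vector. -/
def vxor (v w : ι → ℤ) : ι → ℤ := fun i => v i + w i - 2 * (v i * w i)

/-- ξ_k = exp(2πi/2^k). -/
def xi (k : ℕ) : ℂ := Complex.exp (2 * Real.pi * Complex.I / 2 ^ k)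

/-- τ_R^{(k)} = diag(ξ^{v R vᵀ mod 2^k}), indexed by v ∈ {0,1}^m. -/
def tau (k : ℕ) (R : Matrix ι ι ℤ) : Matrix (ι → ZMod 2) (ι → ZMod 2) ℂ :=
  Matrix.diagonal fun v => xi k ^ (bil R (toZ v) (toZ v) % 2 ^ k)

/-- The Hermitian Pauli matrix E(a,b) extended to integer-vector arguments:
    E(a,b) e_v = i^{a·b mod 4} (−1)^{v·b} e_{v ⊕ a₀}. -/
def EMat (a b : ι → ℤ) : Matrix (ι → ZMod 2) (ι → ZMod 2) ℂ :=
  Matrix.of fun u v =>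
    if u = v + red2 a then Complex.I ^ (dotZ a b % 4) * (-1 : ℂ) ^ dotZ (toZ v) b else 0

/-- 0th binary digit vector of a (componentwise `mod 2`). -/
def dig0 (a : ι → ℤ) : ι → ℤ := fun i => a i % 2

/-- 1st binary digit vector of a. -/
def dig1 (a : ι → ℤ) : ι → ℤ := fun i => (a i / 2) % 2

/-- q^{(k−1)}(v; R, a, b). -/
def qfun (k : ℕ) (R : Matrix ι ι ℤ) (a b v : ι → ℤ) : ℤ :=
  (1 - 2 ^ (k - 2)) * bil R (dig0 a) (dig0 a)
    + 2 ^ (k - 1) * (dotZ (dig0 a) (dig1 b) + dotZ (dig0 b) (dig1 a))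
    + (2 + 2 ^ (k - 1)) * bil R v (dig0 a) - 4 * eta R v (dig0 a)




-- ==================== auxiliary lemmas ====================

set_option linter.unusedSectionVars false

lemma xi_ne_zero (k : ℕ) : xi k ≠ 0 := Complex.exp_ne_zero _

lemma xi_pow_N (k : ℕ) : xi k ^ ((2:ℤ)^k) = 1 := by
  rw [xi, ← Complex.exp_int_mul]
  have h : (((2:ℤ)^k : ℤ) : ℂ) * (2 * Real.pi * Complex.I / 2 ^ k)
      = 2 * Real.pi * Complex.I := by
    have : (2:ℂ)^k ≠ 0 := pow_ne_zero _ two_ne_zero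
    push_cast
    field_simp
  rw [h, Complex.exp_two_pi_mul_I]

lemma xi_zpow_congr {k : ℕ} {x y : ℤ} (h : x ≡ y [ZMOD (2^k : ℤ)]) :
    xi k ^ x = xi k ^ y := by
  obtain ⟨t, ht⟩ := Int.ModEq.dvd h
  have hy : y = x + 2^k * t := by linarith
  rw [hy, zpow_add₀ (xi_ne_zero k), _root_.zpow_mul, xi_pow_N, _root_.one_zpow, mul_one]

lemma xi_pow_I {j : ℕ} : xi (j+2) ^ ((2:ℤ)^j) = Complex.I := by
  rw [xi, ← Complex.exp_int_mul]
  have h : (((2:ℤ)^j : ℤ) : ℂ) * (2 * Real.pi * Complex.I / 2 ^ (j+2))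
      = (Real.pi/2) * Complex.I := by
    have h2 : (2:ℂ)^(j+2) = 2^j * 4 := by rw [pow_add]; norm_num
    have h0 : (2:ℂ)^j ≠ 0 := pow_ne_zero _ two_ne_zero
    rw [h2]
    push_cast
    field_simp
    ring
  rw [h, Complex.exp_mul_I, Complex.cos_pi_div_two, Complex.sin_pi_div_two]
  simp

lemma xi_pow_neg1 {j : ℕ} : xi (j+2) ^ ((2:ℤ)^(j+1)) = -1 := by
  rw [xi, ← Complex.exp_int_mul]
  have h : (((2:ℤ)^(j+1) : ℤ) : ℂ) * (2 * Real.pi * Complex.I / 2 ^ (j+2))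
      = Real.pi * Complex.I := by
    have h2 : (2:ℂ)^(j+2) = 2^(j+1) * 2 := by rw [pow_succ]
    have h0 : (2:ℂ)^(j+1) ≠ 0 := pow_ne_zero _ two_ne_zero
    rw [h2]
    push_cast
    field_simp
  rw [h, Complex.exp_pi_mul_I]

lemma star_xi_zpow (k : ℕ) (n : ℤ) : star (xi k ^ n) = xi k ^ (-n) := by
  have hr : (2 * ↑Real.pi * Complex.I / 2 ^ k : ℂ)
      = ((2 * Real.pi / 2 ^ k : ℝ) : ℂ) * Complex.I := by push_cast; ring
  have hs : star (xi k) = (xi k)⁻¹ := by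
    have h : (starRingEnd ℂ) (2 * Real.pi * Complex.I / 2 ^ k)
        = -(2 * Real.pi * Complex.I / 2 ^ k) := by
      rw [hr, _root_.map_mul, Complex.conj_ofReal, Complex.conj_I]
      ring
    rw [xi, show (star (Complex.exp (2 * ↑Real.pi * Complex.I / 2 ^ k)) : ℂ)
        = (starRingEnd ℂ) (Complex.exp (2 * ↑Real.pi * Complex.I / 2 ^ k)) from rfl,
      ← Complex.exp_conj, h, Complex.exp_neg]
  rw [show star (xi k ^ n) = (star (xi k))^n from star_zpow₀ _ _, hs, _root_.inv_zpow, ← _root_.zpow_neg]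

/-- third-and-higher digits of an integer vector -/
def qa (a : ι → ℤ) : ι → ℤ := fun i => a i / 2 / 2

lemma dotZ_comm (x y : ι → ℤ) : dotZ x y = dotZ y x := by
  simp [dotZ, mul_comm]

lemma dotZ_add_left (x y z : ι → ℤ) : dotZ (x + y) z = dotZ x z + dotZ y z := by
  simp [dotZ, Pi.add_apply, add_mul, Finset.sum_add_distrib]

lemma dotZ_add_right (x y z : ι → ℤ) : dotZ x (y + z) = dotZ x y + dotZ x z := by
  simp [dotZ, Pi.add_apply, mul_add, Finset.sum_add_distrib]

lemma dotZ_mulC_left (c : ℤ) (x y : ι → ℤ) :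
    dotZ (fun i => c * x i) y = c * dotZ x y := by
  simp [dotZ, Finset.mul_sum, mul_assoc]

lemma dotZ_mulC_right (c : ℤ) (x y : ι → ℤ) :
    dotZ x (fun i => c * y i) = c * dotZ x y := by
  simp only [dotZ, Finset.mul_sum]
  exact Finset.sum_congr rfl fun i _ => by ring

lemma digit_decomp (x : ι → ℤ) :
    x = dig0 x + ((fun i => 2 * dig1 x i) + fun i => 4 * qa x i) := by
  funext i
  simp only [dig0, dig1, qa, Pi.add_apply]
  omega

lemma dotZ_decomp (x y : ι → ℤ) :
    dotZ x y = dotZ (dig0 x) (dig0 y) + 2 * dotZ (dig0 x) (dig1 y)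
      + 4 * dotZ (dig0 x) (qa y) + 2 * dotZ (dig1 x) (dig0 y)
      + 4 * dotZ (dig1 x) (dig1 y) + 8 * dotZ (dig1 x) (qa y)
      + 4 * dotZ (qa x) (dig0 y) + 8 * dotZ (qa x) (dig1 y)
      + 16 * dotZ (qa x) (qa y) := by
  conv_lhs => rw [digit_decomp x, digit_decomp y]
  simp only [dotZ_add_left, dotZ_add_right, dotZ_mulC_left, dotZ_mulC_right]
  ring

lemma dotZ_bits_right (x y : ι → ℤ) :
    dotZ x y = dotZ x (dig0 y) + 2 * dotZ x (dig1 y) + 4 * dotZ x (qa y) := by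
  conv_lhs => rw [digit_decomp y]
  simp only [dotZ_add_right, dotZ_mulC_right]
  ring

lemma bil_add_left (R : Matrix ι ι ℤ) (x y z : ι → ℤ) :
    bil R (x + y) z = bil R x z + bil R y z := by
  simp [bil, Pi.add_apply, add_mul, Finset.sum_add_distrib]

lemma bil_sub_left (R : Matrix ι ι ℤ) (x y z : ι → ℤ) :
    bil R (x - y) z = bil R x z - bil R y z := by
  simp [bil, Pi.sub_apply, sub_mul, Finset.sum_sub_distrib]

lemma bil_add_right (R : Matrix ι ι ℤ) (x y z : ι → ℤ) :
    bil R x (y + z) = bil R x y + bil R x z := by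
  simp [bil, Pi.add_apply, mul_add, Finset.sum_add_distrib]

lemma bil_sub_right (R : Matrix ι ι ℤ) (x y z : ι → ℤ) :
    bil R x (y - z) = bil R x y - bil R x z := by
  simp [bil, Pi.sub_apply, mul_sub, Finset.sum_sub_distrib]

lemma bil_symm {R : Matrix ι ι ℤ} (hR : R.IsSymm) (x y : ι → ℤ) :
    bil R x y = bil R y x := by
  rw [bil, bil, Finset.sum_comm]
  refine Finset.sum_congr rfl fun j _ => Finset.sum_congr rfl fun i _ => ?_
  rw [← hR.apply i j]
  ring

lemma dotZ_vecMul (R : Matrix ι ι ℤ) (x y : ι → ℤ) :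
    dotZ x (Matrix.vecMul y R) = bil R y x := by
  simp only [dotZ, bil, Matrix.vecMul, dotProduct, Finset.mul_sum]
  rw [Finset.sum_comm]
  exact Finset.sum_congr rfl fun i _ => Finset.sum_congr rfl fun j _ => by ring

lemma bil_vxor {R : Matrix ι ι ℤ} (hR : R.IsSymm) (x y : ι → ℤ) :
    bil R (vxor x y) (vxor x y)
      = bil R x x + bil R y y + 2 * bil R x y - 4 * eta R x y := by
  have h : vxor x y = (x + y) - ((x*y) + (x*y)) := by
    funext i
    simp only [vxor, Pi.add_apply, Pi.sub_apply, Pi.mul_apply]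
    ring
  rw [h, eta]
  simp only [bil_add_left, bil_add_right, bil_sub_left, bil_sub_right]
  rw [bil_symm hR y x, bil_symm hR (x*y) x, bil_symm hR (x*y) y]
  ring

lemma red2_dig0 (a : ι → ℤ) : red2 (dig0 a) = red2 a := by
  funext i
  simp only [red2, dig0]
  exact ZMod.intCast_mod (a i) 2

lemma toZ_add_red2 (v : ι → ZMod 2) (a : ι → ℤ) :
    toZ (v + red2 a) = vxor (toZ v) (dig0 a) := by
  funext i
  simp only [toZ, red2, vxor, dig0, Pi.add_apply]
  have hcast : ((a i : ZMod 2)) = ((a i % 2 : ℤ) : ZMod 2) := (ZMod.intCast_mod (a i) 2).symm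
  have h2 : ∀ x : ZMod 2, x = 0 ∨ x = 1 := by decide
  rcases Int.emod_two_eq (a i) with h | h <;> rw [h] at hcast ⊢ <;>
    rcases h2 (v i) with hv | hv <;> rw [hv, hcast] <;> norm_num <;> decide

lemma key_scalar {j : ℕ} {X1 Y1 Z1 X2 Q Y2 Z2 : ℤ}
    (h : X1 + 2^j * Y1 + 2^(j+1) * Z1 - X2
        ≡ Q + 2^j * Y2 + 2^(j+1) * Z2 [ZMOD ((2:ℤ)^(j+2))]) :
    xi (j+2) ^ (X1 % 2^(j+2)) * (Complex.I ^ (Y1 % 4) * (-1:ℂ) ^ Z1)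
        * star (xi (j+2) ^ (X2 % 2^(j+2)))
      = xi (j+2) ^ (Q % 2^(j+2)) * (Complex.I ^ (Y2 % 4) * (-1:ℂ) ^ Z2) := by
  have hI : ∀ n : ℤ, (Complex.I:ℂ) ^ n = xi (j+2) ^ ((2:ℤ)^j * n) := fun n => by
    rw [_root_.zpow_mul, xi_pow_I]
  have hN : ∀ n : ℤ, ((-1:ℂ)) ^ n = xi (j+2) ^ ((2:ℤ)^(j+1) * n) := fun n => by
    rw [_root_.zpow_mul, xi_pow_neg1]
  rw [star_xi_zpow, hI, hI, hN, hN]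
  simp only [← zpow_add₀ (xi_ne_zero (j+2))]
  apply xi_zpow_congr
  have mm : ∀ x : ℤ, x % (2:ℤ)^(j+2) ≡ x [ZMOD ((2:ℤ)^(j+2))] := fun x =>
    Int.emod_emod_of_dvd x dvd_rfl
  have m4 : ∀ y : ℤ, (2:ℤ)^j * (y % 4) ≡ 2^j * y [ZMOD ((2:ℤ)^(j+2))] := fun y => by
    have h4 : y % 4 ≡ y [ZMOD (4:ℤ)] := Int.emod_emod_of_dvd y dvd_rfl
    have h5 := h4.mul_left' (c := (2:ℤ)^j)
    have e : (2:ℤ)^j * 4 = 2^(j+2) := by ring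
    rwa [e] at h5
  have lhs_mod : X1 % 2^(j+2) + ((2:ℤ)^j * (Y1 % 4) + (2:ℤ)^(j+1) * Z1)
        + -(X2 % 2^(j+2))
      ≡ X1 + ((2:ℤ)^j * Y1 + (2:ℤ)^(j+1) * Z1) + -X2 [ZMOD ((2:ℤ)^(j+2))] :=
    ((mm X1).add ((m4 Y1).add (Int.ModEq.refl _))).add (mm X2).neg
  have rhs_mod : Q % 2^(j+2) + ((2:ℤ)^j * (Y2 % 4) + (2:ℤ)^(j+1) * Z2)
      ≡ Q + ((2:ℤ)^j * Y2 + (2:ℤ)^(j+1) * Z2) [ZMOD ((2:ℤ)^(j+2))] :=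
    (mm Q).add ((m4 Y2).add (Int.ModEq.refl _))
  have h' : X1 + ((2:ℤ)^j * Y1 + (2:ℤ)^(j+1) * Z1) + -X2
      ≡ Q + ((2:ℤ)^j * Y2 + (2:ℤ)^(j+1) * Z2) [ZMOD ((2:ℤ)^(j+2))] := by
    have e1 : X1 + ((2:ℤ)^j * Y1 + (2:ℤ)^(j+1) * Z1) + -X2
        = X1 + 2^j * Y1 + 2^(j+1) * Z1 - X2 := by ring
    have e2 : Q + ((2:ℤ)^j * Y2 + (2:ℤ)^(j+1) * Z2)
        = Q + 2^j * Y2 + 2^(j+1) * Z2 := by ring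
    rw [e1, e2]
    exact h
  exact lhs_mod.trans (h'.trans rhs_mod.symm)

theorem stmt2 {m k : ℕ} (hm : 1 ≤ m) (hk : 2 ≤ k)
    (R : Matrix (Fin m) (Fin m) ℤ) (hR : R.IsSymm)
    (a b : Fin m → ℤ) (ha : ∀ i, 0 ≤ a i) (hb : ∀ i, 0 ≤ b i)
    (v u : Fin m → ZMod 2) :
    (tau k R * EMat a b * (tau k R)ᴴ) u v
      = xi k ^ (qfun k R a b (toZ v) % 2 ^ k)
          * EMat (dig0 a) (dig0 b + Matrix.vecMul (dig0 a) R) u v := by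
  obtain ⟨j, rfl⟩ : ∃ j, k = j + 2 := ⟨k - 2, by omega⟩
  rw [tau, Matrix.diagonal_conjTranspose, Matrix.mul_diagonal, Matrix.diagonal_mul]
  simp only [EMat, Matrix.of_apply, red2_dig0, Pi.star_apply]
  by_cases h : u = v + red2 a
  · rw [if_pos h, if_pos h, h]
    rw [show qfun (j+2) R a b (toZ v)
        = (1 - 2 ^ j) * bil R (dig0 a) (dig0 a)
          + 2 ^ (j+1) * (dotZ (dig0 a) (dig1 b) + dotZ (dig0 b) (dig1 a))
          + (2 + 2 ^ (j+1)) * bil R (toZ v) (dig0 a) - 4 * eta R (toZ v) (dig0 a) from by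
      rw [qfun]
      norm_num]
    apply key_scalar
    rw [Int.modEq_iff_dvd]
    rw [toZ_add_red2, bil_vxor hR, dotZ_decomp a b, dotZ_bits_right (toZ v) b,
      dotZ_add_right (dig0 a), dotZ_add_right (toZ v), dotZ_vecMul, dotZ_vecMul,
      bil_symm hR (dig0 a) (toZ v), dotZ_comm (dig0 b) (dig1 a)]
    refine ⟨-(dotZ (dig0 a) (qa b) + dotZ (dig1 a) (dig1 b) + 2 * dotZ (dig1 a) (qa b)
      + dotZ (qa a) (dig0 b) + 2 * dotZ (qa a) (dig1 b) + 4 * dotZ (qa a) (qa b)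
      + dotZ (toZ v) (dig1 b) + 2 * dotZ (toZ v) (qa b) - bil R (toZ v) (dig0 a)), ?_⟩
    ring
  · rw [if_neg h, if_neg h]
    ring


end

end CliffordHierarchy
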